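/- Let J ≥ 1. For parameters P = (N, (b_j), (p_S^{(j)})) with N > 0, b_j > 0, p_S^{(j)} ∈ (0,1) for j < J and p_S^{(J)} = 1, define A_P by (A_P)_{jj} = (2p_S^{(j)} - 1) b_j and (A_P)_{j+1,j} = 2(1 - p_S^{(j)}) b_j, and let M(t;P) = e^{tA_P}(N,0,…,0). If M(t;P) = M(t;P̃) for all t ≥ 0, then P = P̃. -/

import Mathlib

/-!
Differentiating `t ↦ e^{tA} v` repeatedly at `t = 0⁺` shows that the observations determine every
Krylov vector `A^k v`. The layer matrix is lower bidiagonal with nonzero subdiagonal and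
`v = N e₀`, so `A^k v` is supported on layers `0, …, k` with nonzero `k`-th entry: the Krylov
matrix `[v | Av | … | Aⁿv]` is triangular and invertible. As `A (A^k v) = A^{k+1} v = Ã^{k+1} ṽ
= Ã (A^k v)`, the matrices `A` and `Ã` agree on a basis, so `A = Ã`. Finally `b_j` is the column
sum of `A` and `p_S^{(j)}` is read off the diagonal entry `(2 p_S^{(j)} - 1) b_j`.
-/

open Matrix Set

lemma Set.EqOn.eqOn_derivs_Ici {E : Type*} [NormedAddCommGroup E] [NormedSpace ℝ E]
    {f g f' g' : ℝ → E} {a : ℝ} (h : EqOn f g (Ici a))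
    (hf : ∀ t, HasDerivAt f (f' t) t) (hg : ∀ t, HasDerivAt g (g' t) t) :
    EqOn f' g' (Ici a) := fun t ht =>
  (uniqueDiffOn_Ici a t ht).eq_deriv _ (hf t).hasDerivWithinAt
    ((hg t).hasDerivWithinAt.congr_of_mem (fun _ hs => h hs) ht)

section MatrixExp

variable {m : Type*} [Fintype m] [DecidableEq m]

attribute [local instance] Matrix.linftyOpNormedRing Matrix.linftyOpNormedAlgebra

lemma hasDerivAt_pow_mul_exp_smul_mulVec (A : Matrix m m ℝ) (v : m → ℝ) (k : ℕ) (t : ℝ) :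
    HasDerivAt (fun s : ℝ => (A ^ k * NormedSpace.exp (s • A)) *ᵥ v)
      ((A ^ (k + 1) * NormedSpace.exp (t • A)) *ᵥ v) t := by
  let L : Matrix m m ℝ →L[ℝ] (m → ℝ) :=
    LinearMap.toContinuousLinearMap (LinearMap.applyₗ v ∘ₗ Matrix.toLin'.toLinearMap)
  have := L.hasFDerivAt.comp_hasDerivAt t ((hasDerivAt_exp_smul_const' A t).const_mul (A ^ k))
  rw [pow_succ, mul_assoc]
  exact this -- `L X` unfolds to `X *ᵥ v`

lemma pow_mulVec_eq_of_exp_smul_mulVec_eq {A A' : Matrix m m ℝ} {v v' : m → ℝ}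
    (h : ∀ t : ℝ, 0 ≤ t → NormedSpace.exp (t • A) *ᵥ v = NormedSpace.exp (t • A') *ᵥ v')
    (k : ℕ) : A ^ k *ᵥ v = A' ^ k *ᵥ v' := by
  have hEqOn : ∀ k : ℕ, EqOn (fun t : ℝ => (A ^ k * NormedSpace.exp (t • A)) *ᵥ v)
      (fun t => (A' ^ k * NormedSpace.exp (t • A')) *ᵥ v') (Ici 0) := by
    intro k
    induction k with
    | zero =>
      intro t ht
      simpa only [pow_zero, one_mul] using h t ht
    | succ k ih =>
      exact ih.eqOn_derivs_Ici (hasDerivAt_pow_mul_exp_smul_mulVec A v k)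
        (hasDerivAt_pow_mul_exp_smul_mulVec A' v' k)
  simpa only [zero_smul, NormedSpace.exp_zero, mul_one] using hEqOn k self_mem_Ici

end MatrixExp

namespace Matrix

variable {R : Type*} {m : ℕ}

def IsLowerBidiagonal [Zero R] (A : Matrix (Fin m) (Fin m) R) : Prop :=
  ∀ i j : Fin m, i ≠ j → (i : ℕ) ≠ j + 1 → A i j = 0

def krylovMatrix [Semiring R] (A : Matrix (Fin m) (Fin m) R) (v : Fin m → R) :
    Matrix (Fin m) (Fin m) R :=
  of fun i k => (A ^ (k : ℕ) *ᵥ v) i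

lemma mul_krylovMatrix [Semiring R] (A : Matrix (Fin m) (Fin m) R) (v : Fin m → R) :
    A * krylovMatrix A v = of fun i (k : Fin m) => (A ^ ((k : ℕ) + 1) *ᵥ v) i := by
  ext i k
  simp only [krylovMatrix, mul_apply, of_apply, pow_succ', ← mulVec_mulVec]
  rfl

lemma eq_of_pow_mulVec_eq [CommRing R] {A A' : Matrix (Fin m) (Fin m) R} {v v' : Fin m → R}
    (hK : IsUnit (krylovMatrix A v).det) (h : ∀ k, A ^ k *ᵥ v = A' ^ k *ᵥ v') : A = A' := by
  have hKK : krylovMatrix A v = krylovMatrix A' v' := by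
    ext i k
    simp only [krylovMatrix, of_apply, h]
  refine ((isUnit_iff_isUnit_det _).mpr hK).mul_right_cancel ?_
  rw [mul_krylovMatrix, hKK, mul_krylovMatrix]
  simp only [h]

namespace IsLowerBidiagonal

section Semiring

variable [Semiring R] {A : Matrix (Fin m) (Fin m) R}

lemma mulVec_apply_eq_zero (hA : A.IsLowerBidiagonal) {w : Fin m → R} {k : ℕ}
    (hw : ∀ j : Fin m, k < j → w j = 0) {i : Fin m} (hi : k + 1 < i) : (A *ᵥ w) i = 0 := by
  simp only [mulVec, dotProduct]
  refine Finset.sum_eq_zero fun j _ => ?_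
  by_cases hj : k < (j : ℕ)
  · rw [hw j hj, mul_zero]
  · rw [hA i j (Fin.ne_of_val_ne (by omega)) (by omega), zero_mul]

lemma mulVec_apply_of_val_eq_succ (hA : A.IsLowerBidiagonal) {w : Fin m → R} {k : ℕ}
    (hw : ∀ j : Fin m, k < j → w j = 0) {i j : Fin m} (hi : (i : ℕ) = k + 1)
    (hj : (j : ℕ) = k) : (A *ᵥ w) i = A i j * w j := by
  simp only [mulVec, dotProduct]
  refine Finset.sum_eq_single j (fun l _ hl => ?_) (by simp)
  rcases lt_or_gt_of_ne (Fin.val_ne_of_ne hl) with hlt | hgt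
  · rw [hA i l (Fin.ne_of_val_ne (by omega)) (by omega), zero_mul]
  · rw [hw l (by omega), mul_zero]

lemma pow_mulVec_apply_eq_zero (hA : A.IsLowerBidiagonal) {v : Fin m → R}
    (hv : ∀ j : Fin m, 0 < (j : ℕ) → v j = 0) :
    ∀ (k : ℕ) (i : Fin m), k < i → (A ^ k *ᵥ v) i = 0
  | 0, i, hi => by simpa only [pow_zero, one_mulVec] using hv i hi
  | k + 1, i, hi => by
    rw [pow_succ', ← mulVec_mulVec]
    exact hA.mulVec_apply_eq_zero (hA.pow_mulVec_apply_eq_zero hv k) hi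

end Semiring

variable [CommRing R] [IsDomain R] {n : ℕ} {A : Matrix (Fin (n + 1)) (Fin (n + 1)) R}
  {v : Fin (n + 1) → R}

lemma pow_mulVec_apply_self_ne_zero (hA : A.IsLowerBidiagonal)
    (hsub : ∀ i j : Fin (n + 1), (i : ℕ) = j + 1 → A i j ≠ 0)
    (hv : ∀ j : Fin (n + 1), 0 < (j : ℕ) → v j = 0) (hv0 : v 0 ≠ 0) (i : Fin (n + 1)) :
    (A ^ (i : ℕ) *ᵥ v) i ≠ 0 := by
  induction i using Fin.induction with
  | zero => simpa only [Fin.val_zero, pow_zero, one_mulVec] using hv0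
  | succ j ih =>
    rw [Fin.val_succ, pow_succ', ← mulVec_mulVec,
      hA.mulVec_apply_of_val_eq_succ (hA.pow_mulVec_apply_eq_zero hv j) (i := j.succ)
        (j := j.castSucc) (by simp) (by simp)]
    exact mul_ne_zero (hsub _ _ (by simp)) ih

lemma det_krylovMatrix_ne_zero (hA : A.IsLowerBidiagonal)
    (hsub : ∀ i j : Fin (n + 1), (i : ℕ) = j + 1 → A i j ≠ 0)
    (hv : ∀ j : Fin (n + 1), 0 < (j : ℕ) → v j = 0) (hv0 : v 0 ≠ 0) :
    (krylovMatrix A v).det ≠ 0 := by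
  rw [det_of_isUpperTriangular (M := krylovMatrix A v)
    fun (i k : Fin (n + 1)) hki => hA.pow_mulVec_apply_eq_zero hv k i hki]
  exact Finset.prod_ne_zero_iff.mpr fun i _ => hA.pow_mulVec_apply_self_ne_zero hsub hv hv0 i

end IsLowerBidiagonal

end Matrix

section LayerMatrix

variable {n : ℕ}

def layerMatrix (b pS : Fin (n + 1) → ℝ) : Matrix (Fin (n + 1)) (Fin (n + 1)) ℝ :=
  of fun i j => if i = j then (2 * pS j - 1) * b j
    else if (i : ℕ) = j + 1 then 2 * (1 - pS j) * b j else 0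

lemma layerMatrix_isLowerBidiagonal (b pS : Fin (n + 1) → ℝ) :
    (layerMatrix b pS).IsLowerBidiagonal := fun i j hij hij' => by
  simp only [layerMatrix, of_apply, if_neg hij, if_neg hij']

lemma layerMatrix_apply_ne_zero_of_val_eq_succ {b pS : Fin (n + 1) → ℝ} (hb : ∀ j, b j ≠ 0)
    (hpS : ∀ j, j ≠ Fin.last n → pS j ≠ 1) {i j : Fin (n + 1)} (hij : (i : ℕ) = j + 1) :
    layerMatrix b pS i j ≠ 0 := by
  have hj : j ≠ Fin.last n := fun h => by have := i.isLt; simp [h] at hij; omega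
  simp only [layerMatrix, of_apply, if_neg (Fin.ne_of_val_ne (by omega : (i : ℕ) ≠ j)),
    if_pos hij]
  exact mul_ne_zero (mul_ne_zero two_ne_zero (sub_ne_zero.mpr (hpS j hj).symm)) (hb j)

lemma eq_of_layerMatrix_eq {b b' pS pS' : Fin (n + 1) → ℝ}
    (h : layerMatrix b pS = layerMatrix b' pS') (hb : ∀ j, b j ≠ 0)
    (hlast : pS (Fin.last n) = 1) (hlast' : pS' (Fin.last n) = 1) : b = b' ∧ pS = pS' := by
  have hdiag (j : Fin (n + 1)) : (2 * pS j - 1) * b j = (2 * pS' j - 1) * b' j := by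
    simpa [layerMatrix] using congrFun₂ h j j
  have hbj (j : Fin (n + 1)) : b j = b' j := by
    by_cases hj : j = Fin.last n
    · subst hj
      have h := hdiag (Fin.last n)
      rw [hlast, hlast'] at h
      linarith
    · have hjn : (j : ℕ) + 1 < n + 1 := by
        have := Fin.val_lt_last hj
        omega
      have hsub : 2 * (1 - pS j) * b j = 2 * (1 - pS' j) * b' j := by
        simpa [layerMatrix, Fin.ext_iff] using congrFun₂ h ⟨j + 1, hjn⟩ j
      linarith [hdiag j]
  refine ⟨funext hbj, funext fun j => ?_⟩
  have h := hdiag j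
  rw [← hbj j] at h
  linarith [mul_right_cancel₀ (hb j) h]

end LayerMatrix

theorem stmt_10_general (n : ℕ)
    (N N' : ℝ) (b b' pS pS' : Fin (n + 1) → ℝ)
    (hN : 0 < N)
    (hb : ∀ j, 0 < b j)
    (hpS : ∀ j : Fin (n + 1), j ≠ Fin.last n → pS j ∈ Set.Ioo (0:ℝ) 1)
    (hlast : pS (Fin.last n) = 1) (hlast' : pS' (Fin.last n) = 1)
    (A A' : Matrix (Fin (n + 1)) (Fin (n + 1)) ℝ)
    (hA : ∀ i j, A i j =
      if i = j then (2 * pS j - 1) * b j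
      else if (i : ℕ) = (j : ℕ) + 1 then 2 * (1 - pS j) * b j else 0)
    (hA' : ∀ i j, A' i j =
      if i = j then (2 * pS' j - 1) * b' j
      else if (i : ℕ) = (j : ℕ) + 1 then 2 * (1 - pS' j) * b' j else 0)
    (hM : ∀ t : ℝ, 0 ≤ t →
      (NormedSpace.exp (t • A)).mulVec (fun j => if j = 0 then N else 0) =
      (NormedSpace.exp (t • A')).mulVec (fun j => if j = 0 then N' else 0)) :
    N = N' ∧ b = b' ∧ pS = pS' := by
  have hA_eq : A = layerMatrix b pS := Matrix.ext hA
  have hA'_eq : A' = layerMatrix b' pS' := Matrix.ext hA'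
  have hpow := pow_mulVec_eq_of_exp_smul_mulVec_eq hM
  have hNN : N = N' := by simpa using congrFun (hpow 0) 0
  have hK : IsUnit (krylovMatrix A fun j => if j = 0 then N else 0).det := by
    refine IsUnit.mk0 _ ?_
    rw [hA_eq]
    refine (layerMatrix_isLowerBidiagonal b pS).det_krylovMatrix_ne_zero
      (fun i j hij => layerMatrix_apply_ne_zero_of_val_eq_succ (fun j => (hb j).ne')
        (fun j hj => (hpS j hj).2.ne) hij)
      (fun j hj => if_neg (Fin.pos_iff_ne_zero.mp hj)) (by simpa using hN.ne')
  have hAA := eq_of_pow_mulVec_eq hK hpow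
  rw [hA_eq, hA'_eq] at hAA
  exact ⟨hNN, eq_of_layerMatrix_eq hAA (fun j => (hb j).ne') hlast hlast'⟩

/-- Structural identifiability of the age-independent multilayer model:
two parameter sets producing the same layerwise mean cell numbers
`M(t;P) = e^{tA_P}(N,0,…,0)` for all `t ≥ 0` must coincide. -/
theorem stmt_10 (n : ℕ)
    (N N' : ℝ) (b b' pS pS' : Fin (n + 1) → ℝ)
    (hN : 0 < N) (hN' : 0 < N')
    (hb : ∀ j, 0 < b j) (hb' : ∀ j, 0 < b' j)
    (hpS : ∀ j : Fin (n + 1), j ≠ Fin.last n → pS j ∈ Set.Ioo (0:ℝ) 1)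
    (hpS' : ∀ j : Fin (n + 1), j ≠ Fin.last n → pS' j ∈ Set.Ioo (0:ℝ) 1)
    (hlast : pS (Fin.last n) = 1) (hlast' : pS' (Fin.last n) = 1)
    (A A' : Matrix (Fin (n + 1)) (Fin (n + 1)) ℝ)
    (hA : ∀ i j, A i j =
      if i = j then (2 * pS j - 1) * b j
      else if (i : ℕ) = (j : ℕ) + 1 then 2 * (1 - pS j) * b j else 0)
    (hA' : ∀ i j, A' i j =
      if i = j then (2 * pS' j - 1) * b' j
      else if (i : ℕ) = (j : ℕ) + 1 then 2 * (1 - pS' j) * b' j else 0)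
    (hM : ∀ t : ℝ, 0 ≤ t →
      (NormedSpace.exp (t • A)).mulVec (fun j => if j = 0 then N else 0) =
      (NormedSpace.exp (t • A')).mulVec (fun j => if j = 0 then N' else 0)) :
    N = N' ∧ b = b' ∧ pS = pS' :=
  stmt_10_general n N N' b b' pS pS' hN hb hpS hlast hlast' A A' hA hA' hM
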